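/- For 0 < x < π/2 let ψ(x) = (1/(2cos²x))·(1 + sin(2x)/(2x)). Then ψ extends continuously to ψ(0)=1, is strictly increasing on (0, π/2) with ψ(x) → ∞ as x → π/2⁻, so that for each K/S₀ > 1 the equation ψ(x) = K/S₀ has a unique solution x ∈ (0, π/2). -/
import Mathlib

open Real Filter

noncomputable def psiSqrt (x : ℝ) : ℝ :=
  1 / (2 * Real.cos x ^ 2) * (1 + Real.sin (2 * x) / (2 * x))

lemma psi_eq {x : ℝ} (hx : x ∈ Set.Ioo 0 (π / 2)) :
    psiSqrt x = (1 / Real.cos x ^ 2 + Real.tan x / x) / 2 := by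
  have hc : 0 < Real.cos x := Real.cos_pos_of_mem_Ioo ⟨by linarith [hx.1, Real.pi_pos], hx.2⟩
  unfold psiSqrt
  rw [Real.sin_two_mul, Real.tan_eq_sin_div_cos]
  field_simp [hc.ne', hx.1.ne']

lemma cont_psi {x : ℝ} (hx : x ∈ Set.Ioo 0 (π / 2)) : ContinuousAt psiSqrt x := by
  have hc : 0 < Real.cos x := Real.cos_pos_of_mem_Ioo ⟨by linarith [hx.1, Real.pi_pos], hx.2⟩
  have h1 : (2 * Real.cos x ^ 2 : ℝ) ≠ 0 := by positivity
  have h2 : (2 * x : ℝ) ≠ 0 := by have := hx.1; positivity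
  have hA : ContinuousAt (fun x : ℝ => 1 / (2 * Real.cos x ^ 2)) x :=
    ContinuousAt.div continuousAt_const (by fun_prop) h1
  have hB : ContinuousAt (fun x : ℝ => Real.sin (2 * x) / (2 * x)) x :=
    ContinuousAt.div (by fun_prop) (by fun_prop) h2
  exact hA.mul (continuousAt_const.add hB)

lemma tan_div_mono : StrictMonoOn (fun x => Real.tan x / x) (Set.Ioo 0 (π / 2)) := by
  have hint : interior (Set.Ioo 0 (π/2)) = Set.Ioo 0 (π/2) := interior_Ioo
  apply strictMonoOn_of_deriv_pos (convex_Ioo _ _)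
  · intro x hx
    have hc : 0 < Real.cos x := Real.cos_pos_of_mem_Ioo ⟨by linarith [hx.1, Real.pi_pos], hx.2⟩
    exact ((Real.continuousAt_tan.2 hc.ne').div continuousAt_id hx.1.ne').continuousWithinAt
  · intro x hx
    rw [hint] at hx
    have hx0 : 0 < x := hx.1
    have hc : 0 < Real.cos x := Real.cos_pos_of_mem_Ioo ⟨by linarith [hx.1, Real.pi_pos], hx.2⟩
    have hd : HasDerivAt (fun x => Real.tan x / x)
        ((1 / Real.cos x ^ 2 * x - Real.tan x * 1) / x ^ 2) x :=
      (Real.hasDerivAt_tan hc.ne').div (hasDerivAt_id x) hx0.ne'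
    rw [hd.deriv]
    have hs : 0 < Real.sin x := Real.sin_pos_of_pos_of_lt_pi hx0 (by linarith [hx.2, Real.pi_pos])
    have key : Real.sin x * Real.cos x < x :=
      lt_of_le_of_lt (by nlinarith [Real.cos_le_one x]) (Real.sin_lt hx0)
    have htan : Real.tan x < 1 / Real.cos x ^ 2 * x := by
      have h3 : Real.tan x = Real.sin x * Real.cos x / Real.cos x ^ 2 := by
        rw [Real.tan_eq_sin_div_cos]; field_simp [hc.ne']
      have h4 : 1 / Real.cos x ^ 2 * x = x / Real.cos x ^ 2 := by ring
      rw [h3, h4]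
      gcongr
    apply div_pos (by linarith) (by positivity)

theorem psi_mono : StrictMonoOn psiSqrt (Set.Ioo 0 (π / 2)) := by
  intro a ha b hb hab
  rw [psi_eq ha, psi_eq hb]
  have hca : 0 < Real.cos a := Real.cos_pos_of_mem_Ioo ⟨by linarith [ha.1, Real.pi_pos], ha.2⟩
  have hcb : 0 < Real.cos b := Real.cos_pos_of_mem_Ioo ⟨by linarith [hb.1, Real.pi_pos], hb.2⟩
  have hcos : Real.cos b < Real.cos a :=
    Real.strictAntiOn_cos ⟨le_of_lt ha.1, by linarith [ha.2, Real.pi_pos]⟩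
      ⟨le_of_lt hb.1, by linarith [hb.2, Real.pi_pos]⟩ hab
  have hg : 1 / Real.cos a ^ 2 < 1 / Real.cos b ^ 2 := by
    apply one_div_lt_one_div_of_lt (by positivity)
    nlinarith
  have hf := tan_div_mono ha hb hab
  simp only at hf
  linarith

lemma psi_limit_zero : Tendsto psiSqrt (nhdsWithin 0 (Set.Ioi 0)) (nhds 1) := by
  have hslope : Tendsto (fun y : ℝ => Real.sin y / y) (nhdsWithin 0 {(0:ℝ)}ᶜ) (nhds 1) := by
    have := (Real.hasDerivAt_sin 0)
    rw [hasDerivAt_iff_tendsto_slope, Real.cos_zero] at this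
    refine this.congr fun y => ?_
    simp [slope_def_field]
  have hmap : Tendsto (fun x : ℝ => 2 * x) (nhdsWithin 0 (Set.Ioi 0)) (nhdsWithin 0 {(0:ℝ)}ᶜ) := by
    rw [tendsto_nhdsWithin_iff]
    constructor
    · have : Continuous (fun x : ℝ => 2 * x) := by fun_prop
      have h0 := (this.tendsto 0).mono_left (nhdsWithin_le_nhds (s := Set.Ioi (0:ℝ)))
      simpa using h0
    · filter_upwards [self_mem_nhdsWithin] with x hx
      simp only [Set.mem_Ioi] at hx
      simp only [Set.mem_compl_iff, Set.mem_singleton_iff]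
      positivity
  have h1 : Tendsto (fun x : ℝ => Real.sin (2 * x) / (2 * x)) (nhdsWithin 0 (Set.Ioi 0)) (nhds 1) :=
    hslope.comp hmap
  have h2 : Tendsto (fun x : ℝ => 1 / (2 * Real.cos x ^ 2)) (nhdsWithin 0 (Set.Ioi 0))
      (nhds (1 / 2)) := by
    apply Tendsto.mono_left _ nhdsWithin_le_nhds
    have : ContinuousAt (fun x : ℝ => 1 / (2 * Real.cos x ^ 2)) 0 :=
      ContinuousAt.div continuousAt_const (by fun_prop) (by simp)
    simpa using this.tendsto
  have h := h2.mul ((tendsto_const_nhds (α := ℝ) (x := (1:ℝ))).add h1)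
  rw [show (1:ℝ)/2 * (1+1) = 1 by norm_num] at h
  exact h

lemma psi_limit_top : Tendsto psiSqrt (nhdsWithin (π / 2) (Set.Iio (π / 2))) atTop := by
  have hmem : ∀ᶠ x in nhdsWithin (π / 2) (Set.Iio (π / 2)), x ∈ Set.Ioo 0 (π / 2) := by
    have h0 : Set.Ioo 0 (π / 2) ∈ nhdsWithin (π / 2) (Set.Iio (π / 2)) := by
      rw [mem_nhdsWithin]
      exact ⟨Set.Ioi 0, isOpen_Ioi, by simp [Real.pi_pos], by
        intro x hx; exact ⟨hx.1, hx.2⟩⟩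
    exact h0
  have hcos : Tendsto (fun x : ℝ => 2 * Real.cos x ^ 2) (nhdsWithin (π / 2) (Set.Iio (π / 2)))
      (nhdsWithin 0 (Set.Ioi 0)) := by
    rw [tendsto_nhdsWithin_iff]
    constructor
    · have hct : ContinuousAt (fun x : ℝ => 2 * Real.cos x ^ 2) (π / 2) := by fun_prop
      have h0 := hct.tendsto.mono_left (nhdsWithin_le_nhds (s := Set.Iio (π/2)))
      simpa [Real.cos_pi_div_two] using h0
    · filter_upwards [hmem] with x hx
      have hc : 0 < Real.cos x := Real.cos_pos_of_mem_Ioo ⟨by linarith [hx.1, Real.pi_pos], hx.2⟩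
      simp only [Set.mem_Ioi]
      positivity
  have hbig : Tendsto (fun x : ℝ => 1 / (2 * Real.cos x ^ 2))
      (nhdsWithin (π / 2) (Set.Iio (π / 2))) atTop := by
    have := tendsto_inv_nhdsGT_zero.comp hcos
    simpa [Function.comp_def, one_div] using this
  apply tendsto_atTop_mono' _ _ hbig
  filter_upwards [hmem] with x hx
  have hc : 0 < Real.cos x := Real.cos_pos_of_mem_Ioo ⟨by linarith [hx.1, Real.pi_pos], hx.2⟩
  have hs : 0 ≤ Real.sin (2 * x) := by
    apply Real.sin_nonneg_of_nonneg_of_le_pi <;> nlinarith [hx.1, hx.2, Real.pi_pos]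
  have hfac : (1:ℝ) ≤ 1 + Real.sin (2 * x) / (2 * x) := by
    have : 0 ≤ Real.sin (2 * x) / (2 * x) := div_nonneg hs (by linarith [hx.1])
    linarith
  unfold psiSqrt
  exact le_mul_of_one_le_right (by positivity) hfac

theorem stmt9 :
    Tendsto psiSqrt (nhdsWithin 0 (Set.Ioi 0)) (nhds 1) ∧
    StrictMonoOn psiSqrt (Set.Ioo 0 (π / 2)) ∧
    Tendsto psiSqrt (nhdsWithin (π / 2) (Set.Iio (π / 2))) atTop ∧
    ∀ r : ℝ, 1 < r → ∃! x : ℝ, x ∈ Set.Ioo 0 (π / 2) ∧ psiSqrt x = r := by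
  refine ⟨psi_limit_zero, psi_mono, psi_limit_top, ?_⟩
  intro r hr
  have hpi : 0 < π := Real.pi_pos
  -- find a with psiSqrt a < r, a ∈ Ioo 0 (π/4)
  have hev1 : ∀ᶠ x in nhdsWithin 0 (Set.Ioi (0:ℝ)), psiSqrt x < r :=
    psi_limit_zero.eventually_lt_const hr
  have hev2 : ∀ᶠ x in nhdsWithin 0 (Set.Ioi (0:ℝ)), x ∈ Set.Ioo 0 (π/4) := by
    rw [eventually_nhdsWithin_iff]
    filter_upwards [Iio_mem_nhds (show (0:ℝ) < π/4 by linarith)] with x hx hx'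
    exact ⟨hx', hx⟩
  obtain ⟨a, ha1, ha2⟩ := (hev1.and hev2).exists
  -- find b with r < psiSqrt b, b ∈ Ioo (π/4) (π/2)
  have hev3 : ∀ᶠ x in nhdsWithin (π/2) (Set.Iio (π/2)), r < psiSqrt x :=
    psi_limit_top.eventually_gt_atTop r
  have hev4 : ∀ᶠ x in nhdsWithin (π/2) (Set.Iio (π/2)), x ∈ Set.Ioo (π/4) (π/2) := by
    rw [eventually_nhdsWithin_iff]
    filter_upwards [Ioi_mem_nhds (show π/4 < π/2 by linarith)] with x hx hx'
    exact ⟨hx, hx'⟩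
  obtain ⟨b, hb1, hb2⟩ := (hev3.and hev4).exists
  have haI : a ∈ Set.Ioo 0 (π/2) := ⟨ha2.1, by linarith [ha2.2]⟩
  have hbI : b ∈ Set.Ioo 0 (π/2) := ⟨by linarith [hb2.1], hb2.2⟩
  have hab : a ≤ b := by linarith [ha2.2, hb2.1]
  have hsub : Set.Icc a b ⊆ Set.Ioo 0 (π/2) := fun y hy => ⟨by linarith [hy.1, haI.1], by
    linarith [hy.2, hbI.2]⟩
  have hcont : ContinuousOn psiSqrt (Set.Icc a b) := fun y hy =>
    (cont_psi (hsub hy)).continuousWithinAt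
  have hmem : r ∈ Set.Icc (psiSqrt a) (psiSqrt b) := ⟨le_of_lt ha1, le_of_lt hb1⟩
  obtain ⟨x, hx, hxr⟩ := intermediate_value_Icc hab hcont hmem
  refine ⟨x, ⟨hsub hx, hxr⟩, ?_⟩
  rintro y ⟨hy, hyr⟩
  exact psi_mono.injOn hy (hsub hx) (by rw [hyr, hxr])
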